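/- arXiv:1709.02726 — 2 statements merged into one kernel-verified Lean document; each statement's English description precedes it below -/
import Mathlib

section
/- (Optimization margin for FTRL) Let g ∈ H, let r : H → ℝ∪{±∞} be proper and directionally differentiable with domain S, let X ⊂ H be convex with X ∩ S nonempty, and suppose x⁺ ∈ argmin_{x∈X} ⟨g,x⟩ + r(x) is attained. Then for any x ∈ X ∩ S: +∞ > ⟨g, x − x⁺⟩ + r(x) − r(x⁺) ≥ B_r(x, x⁺). -/
/-!
By convexity the segment from `x⁺` to `x` lies in `X`, and minimality of `x⁺` along it gives
`r(x⁺) ≤ α ⟨g, x - x⁺⟩ + r(x⁺ + α (x - x⁺))` for `α ∈ (0, 1]`. Dividing by `α` and letting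
`α ↓ 0` yields `r'(x⁺; x - x⁺) ≥ -⟨g, x - x⁺⟩`, which is the claimed inequality once `r(x)` and
`r(x⁺)` are known to be finite; `r(x⁺)` is, because it is at most `⟨g, x - x⁺⟩ + r(x) < ∞`.
-/

open Filter Topology

variable {H : Type*} [NormedAddCommGroup H] [InnerProductSpace ℝ H]

/-- `d ∈ [-∞,+∞]` is the directional derivative of `f` at `x` in direction `z`. -/
def HasDirDeriv (f : H → EReal) (x z : H) (d : EReal) : Prop :=
  Tendsto (fun α : ℝ => (f (x + α • z) - f x) * ((α⁻¹ : ℝ) : EReal)) (𝓝[>] (0:ℝ)) (𝓝 d)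

/-- Generalized Bregman divergence `B_f(y,x)` given the directional derivative value `d`. -/
noncomputable def breg (f : H → EReal) (y x : H) (d : EReal) : EReal :=
  if f y ≠ ⊤ ∧ f y ≠ ⊥ then f y - f x - d else ⊤

lemma EReal.neg_coe_le_sub_coe_mul_inv {v : EReal} {b c α : ℝ} (hα : 0 < α)
    (h : (b : EReal) ≤ ((α * c : ℝ) : EReal) + v) :
    ((-c : ℝ) : EReal) ≤ (v - b) * ((α⁻¹ : ℝ) : EReal) := by
  induction v using EReal.rec with
  | bot => simp at h
  | top => simp [EReal.top_mul_coe_of_pos (inv_pos.mpr hα)]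
  | coe v =>
    norm_cast at h ⊢
    have : -c = -(α * c) * α⁻¹ := by field_simp
    rw [this]
    exact mul_le_mul_of_nonneg_right (by linarith) (inv_nonneg.mpr hα.le)

lemma EReal.coe_sub_coe_sub_le {a b c : ℝ} {d : EReal} (hd : ((-c : ℝ) : EReal) ≤ d) :
    (a : EReal) - b - d ≤ ((c : ℝ) : EReal) + a - b := by
  induction d using EReal.rec with
  | bot => simp at hd
  | top => simp [EReal.sub_top]
  | coe d =>
    norm_cast at hd ⊢
    linarith

lemma HasDirDeriv.neg_le_of_le_add {f : H → EReal} {x z : H} {d : EReal} {c : ℝ}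
    (hd : HasDirDeriv f x z d) (hx : f x ≠ ⊤) (hx' : f x ≠ ⊥)
    (hle : ∀ α ∈ Set.Ioc (0 : ℝ) 1, f x ≤ ((α * c : ℝ) : EReal) + f (x + α • z)) :
    ((-c : ℝ) : EReal) ≤ d := by
  rw [← EReal.coe_toReal hx hx'] at hle
  refine ge_of_tendsto hd ?_
  filter_upwards [Ioc_mem_nhdsGT_of_mem (show (0 : ℝ) ∈ Set.Ico 0 1 by norm_num)] with α hα
  rw [← EReal.coe_toReal hx hx']
  exact EReal.neg_coe_le_sub_coe_mul_inv hα.1 (hle α hα)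

variable {g : H} {r : H → EReal} {X : Set H} {xp : H}

lemma IsMinOn.ne_top_of_mem {x : H} (hmin : IsMinOn (fun u => (inner ℝ g u : EReal) + r u) X xp)
    (hxX : x ∈ X) (hx : r x ≠ ⊤) : r xp ≠ ⊤ := by
  have hlt := (hmin hxX).trans_lt (EReal.add_lt_top (EReal.coe_ne_top _) hx)
  intro h
  simp [h] at hlt

lemma IsMinOn.neg_inner_le_dirDeriv {d : EReal} {x : H} (hX : Convex ℝ X) (hxpX : xp ∈ X)
    (hmin : IsMinOn (fun u => (inner ℝ g u : EReal) + r u) X xp) (hxX : x ∈ X)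
    (hxp : r xp ≠ ⊤) (hxp' : r xp ≠ ⊥) (hd : HasDirDeriv r xp (x - xp) d) :
    ((-inner ℝ g (x - xp) : ℝ) : EReal) ≤ d := by
  refine hd.neg_le_of_le_add hxp hxp' fun α hα => ?_
  have hmem := hX.add_smul_sub_mem hxpX hxX (Set.Ioc_subset_Icc_self hα)
  have h := isMinOn_iff.1 hmin _ hmem
  simp only [inner_add_right, inner_smul_right, EReal.coe_add, add_assoc] at h
  exact (EReal.addLECancellable_coe _).add_le_add_iff_left.1 h

theorem stmt4_general (g : H) (r : H → EReal)
    (hproper : (∃ u, r u ≠ ⊤) ∧ ∀ u, r u ≠ ⊥)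
    (Dr : H → H → EReal)
    (hDr : ∀ u z, r u ≠ ⊤ → HasDirDeriv r u z (Dr u z))
    (X : Set H) (hX : Convex ℝ X)
    (xp : H) (hxpX : xp ∈ X)
    (hmin : ∀ u ∈ X, ((inner ℝ g xp : ℝ) : EReal) + r xp ≤ ((inner ℝ g u : ℝ) : EReal) + r u)
    (x : H) (hxX : x ∈ X) (hx : r x ≠ ⊤) :
    ((inner ℝ g (x - xp) : ℝ) : EReal) + r x - r xp < ⊤ ∧
      breg r x xp (Dr xp (x - xp)) ≤ ((inner ℝ g (x - xp) : ℝ) : EReal) + r x - r xp := by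
  have hmin' : IsMinOn (fun u => (inner ℝ g u : EReal) + r u) X xp := isMinOn_iff.mpr hmin
  have hxp := hmin'.ne_top_of_mem hxX hx
  have hkey := hmin'.neg_inner_le_dirDeriv hX hxpX hxX hxp (hproper.2 xp) (hDr xp _ hxp)
  rw [breg, if_pos ⟨hx, hproper.2 x⟩, ← EReal.coe_toReal hx (hproper.2 x),
    ← EReal.coe_toReal hxp (hproper.2 xp)]
  exact ⟨by norm_cast; exact EReal.coe_lt_top _, EReal.coe_sub_coe_sub_le hkey⟩

/-- Optimization margin for FTRL: if `x⁺` minimizes `⟨g,·⟩ + r` over a convex set `X`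
(with `X ∩ dom r ≠ ∅`), then for any `x ∈ X ∩ dom r`,
`+∞ > ⟨g, x - x⁺⟩ + r(x) - r(x⁺) ≥ B_r(x, x⁺)`. -/
theorem stmt4 (g : H) (r : H → EReal)
    (hproper : (∃ u, r u ≠ ⊤) ∧ ∀ u, r u ≠ ⊥)
    (Dr : H → H → EReal)
    (hDr : ∀ u z, r u ≠ ⊤ → HasDirDeriv r u z (Dr u z))
    (X : Set H) (hX : Convex ℝ X) (hne : ∃ u ∈ X, r u ≠ ⊤)
    (xp : H) (hxpX : xp ∈ X)
    (hmin : ∀ u ∈ X, ((inner ℝ g xp : ℝ) : EReal) + r xp ≤ ((inner ℝ g u : ℝ) : EReal) + r u)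
    (x : H) (hxX : x ∈ X) (hx : r x ≠ ⊤) :
    ((inner ℝ g (x - xp) : ℝ) : EReal) + r x - r xp < ⊤ ∧
      breg r x xp (Dr xp (x - xp)) ≤ ((inner ℝ g (x - xp) : ℝ) : EReal) + r x - r xp :=
  stmt4_general g r hproper Dr hDr X hX xp hxpX hmin x hxX hx
end

section
/- (Mirror descent margin) Let X ⊂ H be convex, g ∈ H, let r : H → ℝ∪{±∞} be proper and directionally differentiable with domain S, and let y ∈ S ∩ X be such that r'(y; · − y) is real-valued and linear on S: r'(y; x−y) = ⟨v, x−y⟩ for some v ∈ H and all x ∈ S. Let q : H → ℝ∪{±∞} be proper and directionally differentiable with S ∩ X ∩ dom(q) nonempty, and suppose x⁺ ∈ argmin_{x∈X} ⟨g,x⟩ + q(x) + B_r(x,y) exists with finite optimal value. Then for any x ∈ S ∩ X ∩ dom(q): +∞ > ⟨g, x − x⁺⟩ + q(x) − q(x⁺) + B_r(x,y) − B_r(x⁺,y) ≥ B_{r+q}(x, x⁺). -/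
open Filter Topology

variable {H : Type*} [NormedAddCommGroup H] [InnerProductSpace ℝ H]

/-! Since `r'(y; · - y) = ⟨v, · - y⟩`, the mirror-descent objective `⟨g, ·⟩ + q + B_r(·, y)` differs
from `r + q + ⟨g - v, ·⟩` by a real constant, so `x⁺` also minimizes the latter over `X`. Comparing
`x⁺` with the points `x⁺ + α (x - x⁺)` of `X` yields the first-order condition
`(r + q)'(x⁺; x - x⁺) ≥ ⟨v - g, x - x⁺⟩`, and substituting it into `B_{r+q}(x, x⁺)` gives exactly
the margin, all of whose terms are finite. -/

section Bregman

variable {E : Type*} {f : E → EReal} {u w : E} {d : EReal}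

theorem breg_eq_top (hu : f u = ⊤) : breg f u w d = ⊤ := by
  simp [breg, hu]

theorem breg_eq_of_ne_top (hu : f u ≠ ⊤) (hu' : f u ≠ ⊥) : breg f u w d = f u - f w - d :=
  if_pos ⟨hu, hu'⟩

end Bregman

theorem HasDirDeriv.neg_inner_le_of_isMinOn_add_inner {ψ : H → EReal} {X : Set H} {x₀ x w : H}
    {d : EReal} (hX : Convex ℝ X) (hx₀ : x₀ ∈ X) (hx : x ∈ X) (hψ_top : ψ x₀ ≠ ⊤)
    (hψ_bot : ψ x₀ ≠ ⊥) (hmin : IsMinOn (fun u => ψ u + (inner ℝ w u : ℝ)) X x₀)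
    (hd : HasDirDeriv ψ x₀ (x - x₀) d) : ((-inner ℝ w (x - x₀) : ℝ) : EReal) ≤ d := by
  lift ψ x₀ to ℝ using ⟨hψ_top, hψ_bot⟩ with a ha
  refine ge_of_tendsto hd ?_
  filter_upwards [Ioc_mem_nhdsGT one_pos] with α ⟨hα₀, hα₁⟩
  have hu := hmin (hX.add_smul_sub_mem hx₀ hx ⟨hα₀.le, hα₁⟩)
  simp only [Set.mem_ofPred_eq] at hu
  rw [← ha] at hu ⊢
  generalize ψ (x₀ + α • (x - x₀)) = b at hu ⊢
  induction b using EReal.rec with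
  | bot => simp at hu
  | top => simp [EReal.top_mul_of_pos, hα₀]
  | coe b =>
    rw [inner_add_right, real_inner_smul_right] at hu
    norm_cast at hu ⊢
    rw [← div_eq_mul_inv, le_div_iff₀ hα₀]
    linarith

theorem inner_add_add_breg_eq {r q D : H → EReal} {g v y : H} (hr : ∀ u, r u ≠ ⊥)
    (hq : ∀ u, q u ≠ ⊥) (hy : r y ≠ ⊤)
    (hD : ∀ u, r u ≠ ⊤ → D (u - y) = ((inner ℝ v (u - y) : ℝ) : EReal)) (u : H) :
    ((inner ℝ g u : ℝ) : EReal) + q u + breg r u y (D (u - y))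
      = r u + q u + ((inner ℝ (g - v) u : ℝ) : EReal)
        + ((inner ℝ v y - (r y).toReal : ℝ) : EReal) := by
  lift r y to ℝ using ⟨hy, hr y⟩ with b hb
  by_cases hru : r u = ⊤
  · simp [breg_eq_top hru, hru, hq u, -EReal.coe_sub]
  rw [breg_eq_of_ne_top hru (hr u), hD u hru, ← hb]
  lift r u to ℝ using ⟨hru, hr u⟩ with a
  by_cases hqu : q u = ⊤
  · rw [hqu]; norm_cast
  lift q u to ℝ using ⟨hqu, hq u⟩ with c
  norm_cast
  simp only [inner_sub_left, inner_sub_right, EReal.toReal_coe]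
  ring

theorem stmt16_general (X : Set H) (hX : Convex ℝ X) (g : H)
    (r : H → EReal) (hr_proper : (∃ u, r u ≠ ⊤) ∧ ∀ u, r u ≠ ⊥)
    (Dr : H → H → EReal)
    (y : H) (hyS : r y ≠ ⊤)
    (v : H) (hlin : ∀ u : H, r u ≠ ⊤ → Dr y (u - y) = ((inner ℝ v (u - y) : ℝ) : EReal))
    (q : H → EReal) (hq_proper : (∃ u, q u ≠ ⊤) ∧ ∀ u, q u ≠ ⊥)
    (Drq : H → H → EReal)
    (hDrq : ∀ u z, r u + q u ≠ ⊤ → HasDirDeriv (fun w => r w + q w) u z (Drq u z))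
    (xp : H) (hxpX : xp ∈ X)
    (hxp_fin : ((inner ℝ g xp : ℝ) : EReal) + q xp + breg r xp y (Dr y (xp - y)) ≠ ⊤ ∧
        ((inner ℝ g xp : ℝ) : EReal) + q xp + breg r xp y (Dr y (xp - y)) ≠ ⊥)
    (hmin : ∀ u ∈ X,
      ((inner ℝ g xp : ℝ) : EReal) + q xp + breg r xp y (Dr y (xp - y))
        ≤ ((inner ℝ g u : ℝ) : EReal) + q u + breg r u y (Dr y (u - y)))
    (x : H) (hxX : x ∈ X) (hxr : r x ≠ ⊤) (hxq : q x ≠ ⊤) :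
    ((inner ℝ g (x - xp) : ℝ) : EReal) + q x - q xp
        + breg r x y (Dr y (x - y)) - breg r xp y (Dr y (xp - y)) < ⊤ ∧
      breg (fun w => r w + q w) x xp (Drq xp (x - xp))
        ≤ ((inner ℝ g (x - xp) : ℝ) : EReal) + q x - q xp
          + breg r x y (Dr y (x - y)) - breg r xp y (Dr y (xp - y)) := by
  obtain ⟨-, hr⟩ := hr_proper
  obtain ⟨-, hq⟩ := hq_proper
  have hobj := inner_add_add_breg_eq (g := g) hr hq hyS hlin
  have hxp_top : r xp + q xp ≠ ⊤ := by
    intro h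
    apply hxp_fin.1
    rw [hobj, h, EReal.top_add_coe, EReal.top_add_coe]
  obtain ⟨hrxp, hqxp⟩ := (EReal.add_ne_top_iff_ne_top₂ (hr xp) (hq xp)).mp hxp_top
  have hxp_min : IsMinOn (fun u => r u + q u + ((inner ℝ (g - v) u : ℝ) : EReal)) X xp :=
    fun u hu => by
      have h := hmin u hu
      rwa [hobj, hobj, (EReal.addLECancellable_coe _).add_le_add_iff_right] at h
  have hD := (hDrq xp (x - xp) hxp_top).neg_inner_le_of_isMinOn_add_inner hX hxpX hxX hxp_top
    (EReal.add_ne_bot_iff.mpr ⟨hr xp, hq xp⟩) hxp_min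
  rw [breg_eq_of_ne_top hxr (hr x), breg_eq_of_ne_top hrxp (hr xp), hlin x hxr, hlin xp hrxp,
    breg_eq_of_ne_top (f := fun w => r w + q w) (EReal.add_ne_top hxr hxq)
      (EReal.add_ne_bot_iff.mpr ⟨hr x, hq x⟩)]
  lift r x to ℝ using ⟨hxr, hr x⟩ with rx
  lift r xp to ℝ using ⟨hrxp, hr xp⟩ with rxp
  lift r y to ℝ using ⟨hyS, hr y⟩ with ry
  lift q x to ℝ using ⟨hxq, hq x⟩ with qx
  lift q xp to ℝ using ⟨hqxp, hq xp⟩ with qxp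
  norm_cast
  refine ⟨EReal.coe_lt_top _, (EReal.sub_le_sub le_rfl hD).trans_eq ?_⟩
  norm_cast
  simp only [inner_sub_left, inner_sub_right]
  ring

/-- Mirror-descent margin: if `x⁺` minimizes `⟨g,·⟩ + q + B_r(·,y)` over the convex set `X`
with finite optimal value, and `r'(y; · - y)` is linear (`= ⟨v, · - y⟩`) on `dom r`, then for
any `x ∈ dom r ∩ X ∩ dom q`,
`+∞ > ⟨g, x - x⁺⟩ + q(x) - q(x⁺) + B_r(x,y) - B_r(x⁺,y) ≥ B_{r+q}(x, x⁺)`. -/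
theorem stmt16 (X : Set H) (hX : Convex ℝ X) (g : H)
    (r : H → EReal) (hr_proper : (∃ u, r u ≠ ⊤) ∧ ∀ u, r u ≠ ⊥)
    (Dr : H → H → EReal) (hDr : ∀ u z, r u ≠ ⊤ → HasDirDeriv r u z (Dr u z))
    (y : H) (hyS : r y ≠ ⊤) (hyX : y ∈ X)
    (v : H) (hlin : ∀ u : H, r u ≠ ⊤ → Dr y (u - y) = ((inner ℝ v (u - y) : ℝ) : EReal))
    (q : H → EReal) (hq_proper : (∃ u, q u ≠ ⊤) ∧ ∀ u, q u ≠ ⊥)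
    (Dq : H → H → EReal) (hDq : ∀ u z, q u ≠ ⊤ → HasDirDeriv q u z (Dq u z))
    (Drq : H → H → EReal)
    (hDrq : ∀ u z, r u + q u ≠ ⊤ → HasDirDeriv (fun w => r w + q w) u z (Drq u z))
    (hSq : ∃ u ∈ X, r u ≠ ⊤ ∧ q u ≠ ⊤)
    (xp : H) (hxpX : xp ∈ X)
    (hxp_fin : ((inner ℝ g xp : ℝ) : EReal) + q xp + breg r xp y (Dr y (xp - y)) ≠ ⊤ ∧
        ((inner ℝ g xp : ℝ) : EReal) + q xp + breg r xp y (Dr y (xp - y)) ≠ ⊥)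
    (hmin : ∀ u ∈ X,
      ((inner ℝ g xp : ℝ) : EReal) + q xp + breg r xp y (Dr y (xp - y))
        ≤ ((inner ℝ g u : ℝ) : EReal) + q u + breg r u y (Dr y (u - y)))
    (x : H) (hxX : x ∈ X) (hxr : r x ≠ ⊤) (hxq : q x ≠ ⊤) :
    ((inner ℝ g (x - xp) : ℝ) : EReal) + q x - q xp
        + breg r x y (Dr y (x - y)) - breg r xp y (Dr y (xp - y)) < ⊤ ∧
      breg (fun w => r w + q w) x xp (Drq xp (x - xp))
        ≤ ((inner ℝ g (x - xp) : ℝ) : EReal) + q x - q xp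
          + breg r x y (Dr y (x - y)) - breg r xp y (Dr y (xp - y)) :=
  stmt16_general X hX g r hr_proper Dr y hyS v hlin q hq_proper Drq hDrq xp hxpX hxp_fin hmin x hxX
    hxr hxq
end
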